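/- arXiv:2208.06814 — 2 statements merged into one kernel-verified Lean document; each statement's English description precedes it below -/
import Mathlib

section
/- For every positive integer α and real G, the α-th derivative of x ↦ exp(i G x²) equals exp(i G x²) · Σ_{k=0}^{⌊α/2⌋} p_{α,k} (2iG)^{α−k} x^{α−2k} for some nonnegative real coefficients p_{α,k} with p_{α,0} = 1, p_{α,k} ≥ 1 for k ≥ 1, and Σ_{k=1}^{⌊α/2⌋} p_{α,k} ≤ α!. -/
/-!
With `f = exp (a x²)` one has `f⁽ⁿ⁾ = f · Pₙ` where `Pₙ₊₁ = 2a x Pₙ + Pₙ'`. On the coefficient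
of `(2a)^(n-k) x^(n-2k)` this is the recursion of the numbers `n! / (k! (n - 2k)! 2^k)` of
`k`-edge matchings of the complete graph `Kₙ`: the last vertex is either unmatched or paired with
one of the `n - 2k` vertices left free by a `k`-matching of `Kₙ₋₁`. These numbers are at least `1`
for `2k ≤ n`, and their total, the number of involutions of `n` points, grows at most by the
factor `n + 1` from `n` to `n + 1`, hence is at most `n!`.
-/

open Complex Finset

def matchingNumber : ℕ → ℕ → ℕ
  | _, 0 => 1
  | 0, _ + 1 => 0
  | n + 1, k + 1 => matchingNumber n (k + 1) + (n - 2 * k) * matchingNumber n k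

theorem matchingNumber_eq_zero_of_lt {n k : ℕ} (h : n < 2 * k) : matchingNumber n k = 0 := by
  induction n generalizing k with
  | zero => obtain ⟨k, rfl⟩ := Nat.exists_eq_succ_of_ne_zero (by omega : k ≠ 0); rfl
  | succ n ih =>
    obtain ⟨k, rfl⟩ := Nat.exists_eq_succ_of_ne_zero (by omega : k ≠ 0)
    rw [matchingNumber, ih (by omega), Nat.sub_eq_zero_of_le (by omega), zero_mul, add_zero]

theorem one_le_matchingNumber {n k : ℕ} (h : 2 * k ≤ n) : 1 ≤ matchingNumber n k := by
  induction n generalizing k with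
  | zero => rw [show k = 0 by omega]; rfl
  | succ n ih =>
    cases k with
    | zero => rfl
    | succ k =>
      rw [matchingNumber]
      have : 1 ≤ (n - 2 * k) * matchingNumber n k :=
        Nat.one_le_iff_ne_zero.2 (mul_ne_zero (by omega) (by have := ih (k := k) (by omega); omega))
      omega

theorem sum_range_succ_matchingNumber_succ_mul {R : Type*} [CommSemiring R] (n N : ℕ)
    (t : ℕ → R) :
    ∑ k ∈ range (N + 1), (matchingNumber (n + 1) k : R) * t k =
      ∑ k ∈ range (N + 1), (matchingNumber n k : R) * t k +
        ∑ k ∈ range N, ((n - 2 * k : ℕ) : R) * matchingNumber n k * t (k + 1) := by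
  simp only [sum_range_succ' _ N, matchingNumber, Nat.cast_add, Nat.cast_mul, add_mul,
    sum_add_distrib]
  ring

theorem sum_range_matchingNumber_mul_eq {R : Type*} [CommSemiring R] (t : ℕ → R) {n N : ℕ}
    (hN : n / 2 + 1 ≤ N) :
    ∑ k ∈ range N, (matchingNumber n k : R) * t k =
      ∑ k ∈ range (n / 2 + 1), (matchingNumber n k : R) * t k := by
  refine (sum_subset (range_subset_range.2 hN) fun k _ hk => ?_).symm
  rw [mem_range, not_lt] at hk
  rw [matchingNumber_eq_zero_of_lt (by omega), Nat.cast_zero, zero_mul]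

theorem sum_range_matchingNumber_le_factorial (n N : ℕ) :
    ∑ k ∈ range N, matchingNumber n k ≤ n.factorial := by
  induction n generalizing N with
  | zero => cases N <;> simp [sum_range_succ', matchingNumber]
  | succ n ih =>
    cases N with
    | zero => simp
    | succ N =>
      have h := sum_range_succ_matchingNumber_succ_mul n N (fun _ => (1 : ℕ))
      simp only [Nat.cast_id, mul_one] at h
      calc ∑ k ∈ range (N + 1), matchingNumber (n + 1) k
          ≤ ∑ k ∈ range (N + 1), matchingNumber n k + n * ∑ k ∈ range N, matchingNumber n k := by
            rw [h, mul_sum]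
            gcongr
            exact Nat.sub_le n _
        _ ≤ n.factorial + n * n.factorial := by gcongr <;> exact ih _
        _ = (n + 1).factorial := by rw [Nat.factorial_succ]; ring

theorem hasDerivAt_cexp_mul_sq_mul_pow (a : ℂ) {n k : ℕ} (hk : 2 * k ≤ n) (x : ℝ) :
    HasDerivAt (fun y : ℝ => Complex.exp (a * y ^ 2) * ((2 * a) ^ (n - k) * (y : ℂ) ^ (n - 2 * k)))
      (Complex.exp (a * x ^ 2) * ((2 * a) ^ (n + 1 - k) * (x : ℂ) ^ (n + 1 - 2 * k) +
        ((n - 2 * k : ℕ) : ℂ) * ((2 * a) ^ (n + 1 - (k + 1)) * (x : ℂ) ^ (n + 1 - 2 * (k + 1)))))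
      x := by
  have hexp := ((hasDerivAt_pow 2 (x : ℂ)).const_mul a).cexp
  have hmon := (hasDerivAt_pow (n - 2 * k) (x : ℂ)).const_mul ((2 * a) ^ (n - k))
  convert (hexp.fun_mul hmon).comp_ofReal using 1
  rw [show n + 1 - k = n - k + 1 by omega, show n + 1 - 2 * k = n - 2 * k + 1 by omega,
    show n + 1 - (k + 1) = n - k by omega, show n + 1 - 2 * (k + 1) = n - 2 * k - 1 by omega]
  push_cast
  ring

theorem iteratedDeriv_cexp_mul_sq (a : ℂ) (n : ℕ) :
    iteratedDeriv n (fun y : ℝ => Complex.exp (a * (y : ℂ) ^ 2)) = fun x : ℝ =>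
      Complex.exp (a * (x : ℂ) ^ 2) *
        ∑ k ∈ range (n / 2 + 1),
          (matchingNumber n k : ℂ) * ((2 * a) ^ (n - k) * (x : ℂ) ^ (n - 2 * k)) := by
  induction n with
  | zero => ext x; simp [matchingNumber]
  | succ n ih =>
    rw [iteratedDeriv_succ, ih]
    ext x
    have hterm := HasDerivAt.fun_sum fun k (hk : k ∈ range (n / 2 + 1)) =>
      have h2k : 2 * k ≤ n := by have := mem_range.1 hk; omega
      (hasDerivAt_cexp_mul_sq_mul_pow a h2k x).const_mul (matchingNumber n k : ℂ)
    have hfun : (fun y : ℝ => Complex.exp (a * (y : ℂ) ^ 2) * ∑ k ∈ range (n / 2 + 1),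
          (matchingNumber n k : ℂ) * ((2 * a) ^ (n - k) * (y : ℂ) ^ (n - 2 * k))) =
        fun y : ℝ => ∑ k ∈ range (n / 2 + 1), (matchingNumber n k : ℂ) *
          (Complex.exp (a * (y : ℂ) ^ 2) * ((2 * a) ^ (n - k) * (y : ℂ) ^ (n - 2 * k))) := by
      ext y
      simp only [mul_sum, mul_left_comm]
    have hsum := sum_range_succ_matchingNumber_succ_mul n (n / 2 + 1)
      fun k => (2 * a) ^ (n + 1 - k) * (x : ℂ) ^ (n + 1 - 2 * k)
    rw [sum_range_matchingNumber_mul_eq _ (n := n + 1) (by omega),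
      sum_range_matchingNumber_mul_eq _ (n := n) (by omega)] at hsum
    rw [hfun, hterm.deriv, hsum, mul_add, mul_sum, mul_sum, ← sum_add_distrib]
    exact sum_congr rfl fun k _ => by ring

theorem deriv_exp_quadratic_general (α : ℕ) (G : ℝ) :
    ∃ p : ℕ → ℝ,
      p 0 = 1 ∧
      (∀ k, 0 ≤ p k) ∧
      (∀ k, 1 ≤ k → k ≤ α / 2 → 1 ≤ p k) ∧
      (∑ k ∈ Finset.Icc 1 (α / 2), p k) ≤ (α.factorial : ℝ) ∧
      ∀ x : ℝ,
        iteratedDeriv α (fun y : ℝ => Complex.exp (Complex.I * (G : ℂ) * (y : ℂ) ^ 2)) x =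
          Complex.exp (Complex.I * (G : ℂ) * (x : ℂ) ^ 2) *
            ∑ k ∈ Finset.range (α / 2 + 1),
              (p k : ℂ) * (2 * Complex.I * (G : ℂ)) ^ (α - k) * (x : ℂ) ^ (α - 2 * k) := by
  refine ⟨fun k => matchingNumber α k, by simp [matchingNumber], fun k => Nat.cast_nonneg _,
    fun k _ hk => Nat.one_le_cast.2 (one_le_matchingNumber (by omega)), ?_, fun x => ?_⟩
  · have hIcc : Icc 1 (α / 2) ⊆ range (α / 2 + 1) := fun k hk => by
      rw [mem_Icc] at hk; rw [mem_range]; omega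
    dsimp only
    exact_mod_cast (sum_le_sum_of_subset hIcc).trans
      (sum_range_matchingNumber_le_factorial α (α / 2 + 1))
  · rw [iteratedDeriv_cexp_mul_sq]
    simp only [Complex.ofReal_natCast, mul_assoc]

/-- For every positive integer `α` and real `G`, the `α`-th derivative of
`x ↦ exp(i G x²)` equals `exp(i G x²) · ∑_{k=0}^{⌊α/2⌋} p_{α,k} (2iG)^{α−k} x^{α−2k}`
for nonnegative real coefficients with `p_{α,0} = 1`, `p_{α,k} ≥ 1` for `k ≥ 1`, and
`∑_{k=1}^{⌊α/2⌋} p_{α,k} ≤ α!`. -/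
theorem deriv_exp_quadratic (α : ℕ) (hα : 1 ≤ α) (G : ℝ) :
    ∃ p : ℕ → ℝ,
      p 0 = 1 ∧
      (∀ k, 0 ≤ p k) ∧
      (∀ k, 1 ≤ k → k ≤ α / 2 → 1 ≤ p k) ∧
      (∑ k ∈ Finset.Icc 1 (α / 2), p k) ≤ (α.factorial : ℝ) ∧
      ∀ x : ℝ,
        iteratedDeriv α (fun y : ℝ => Complex.exp (Complex.I * (G : ℂ) * (y : ℂ) ^ 2)) x =
          Complex.exp (Complex.I * (G : ℂ) * (x : ℂ) ^ 2) *
            ∑ k ∈ Finset.range (α / 2 + 1),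
              (p k : ℂ) * (2 * Complex.I * (G : ℂ)) ^ (α - k) * (x : ℂ) ^ (α - 2 * k) :=
  deriv_exp_quadratic_general α G
end

section
/- If α ≥ 3 and the coefficients satisfy the recurrence p_{α+1,1} = α + p_{α,1} and p_{α+1,k} = p_{α,k} + (α − 2k + 2) p_{α,k−1} (with p_{α,k} = 0 when k > ⌊α/2⌋), and if Σ_{k=1}^{⌊α/2⌋} p_{α,k} ≤ α!, then Σ_{k=1}^{⌊(α+1)/2⌋} p_{α+1,k} < (α+1)!. -/
open Finset

/-- If `α ≥ 3` and the coefficients `q = p_{α+1,·}` satisfy the recurrence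
`q 1 = α + p 1` and `q k = p k + (α − 2k + 2) p (k−1)` (with `p k = 0` for `k > ⌊α/2⌋`),
and `∑_{k=1}^{⌊α/2⌋} p k ≤ α!`, then `∑_{k=1}^{⌊(α+1)/2⌋} q k < (α+1)!`. -/
theorem coeff_recurrence_sum_lt (α : ℕ) (hα : 3 ≤ α) (p q : ℕ → ℝ)
    (hp0 : p 0 = 1)
    (hpnonneg : ∀ k, 0 ≤ p k)
    (hpge1 : ∀ k, 1 ≤ k → k ≤ α / 2 → 1 ≤ p k)
    (hpzero : ∀ k, α / 2 < k → p k = 0)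
    (hq1 : q 1 = (α : ℝ) + p 1)
    (hqrec : ∀ k, 2 ≤ k → q k = p k + ((α : ℝ) - 2 * k + 2) * p (k - 1))
    (hsum : (∑ k ∈ Finset.Icc 1 (α / 2), p k) ≤ (α.factorial : ℝ)) :
    (∑ k ∈ Finset.Icc 1 ((α + 1) / 2), q k) < ((α + 1).factorial : ℝ) := by
  set M := α / 2 with hM
  set M' := (α + 1) / 2 with hM'
  have hM2 : 2 ≤ M' := by omega
  have hMle : M' - 1 ≤ M := by omega
  have hMM' : M ≤ M' := by omega
  -- uniform recurrence
  have hqall : ∀ k ∈ Finset.Icc 1 M', q k = p k + ((α : ℝ) - 2 * k + 2) * p (k - 1) := by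
    intro k hk
    simp only [Finset.mem_Icc] at hk
    rcases eq_or_lt_of_le hk.1 with h1 | h1
    · rw [← h1, hq1, hp0]
      push_cast
      ring
    · exact hqrec k h1
  -- p sum over larger range
  have sum1 : (∑ k ∈ Finset.Icc 1 M', p k) ≤ (α.factorial : ℝ) := by
    have heq : (∑ k ∈ Finset.Icc 1 M, p k) = ∑ k ∈ Finset.Icc 1 M', p k := by
      apply Finset.sum_subset (Finset.Icc_subset_Icc le_rfl hMM')
      intro x hx hx'
      simp only [Finset.mem_Icc] at hx hx'
      exact hpzero x (by omega)
    rw [← heq]; exact hsum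
  -- split off k = 1
  have hsplit : Finset.Icc 1 M' = insert 1 (Finset.Icc 2 M') := by
    ext x; simp only [Finset.mem_Icc, Finset.mem_insert]; omega
  -- reindex the shifted sum
  have hreindex : (∑ k ∈ Finset.Icc 2 M', p (k - 1)) = ∑ j ∈ Finset.Icc 1 (M' - 1), p j := by
    apply Finset.sum_nbij' (fun k => k - 1) (fun j => j + 1) <;>
      intro a ha <;> simp only [Finset.mem_Icc] at ha ⊢ <;>
      first | omega | (congr 1; omega)
  have sum2 : (∑ k ∈ Finset.Icc 2 M', ((α : ℝ) - 2 * k + 2) * p (k - 1))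
      ≤ ((α : ℝ) - 2) * (α.factorial : ℝ) := by
    have step1 : (∑ k ∈ Finset.Icc 2 M', ((α : ℝ) - 2 * k + 2) * p (k - 1))
        ≤ ∑ k ∈ Finset.Icc 2 M', ((α : ℝ) - 2) * p (k - 1) := by
      apply Finset.sum_le_sum
      intro k hk
      simp only [Finset.mem_Icc] at hk
      apply mul_le_mul_of_nonneg_right _ (hpnonneg _)
      have : (2 : ℝ) ≤ (k : ℝ) := by exact_mod_cast hk.1
      linarith
    have step2 : (∑ k ∈ Finset.Icc 2 M', ((α : ℝ) - 2) * p (k - 1))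
        = ((α : ℝ) - 2) * ∑ j ∈ Finset.Icc 1 (M' - 1), p j := by
      rw [← Finset.mul_sum, hreindex]
    have step3 : (∑ j ∈ Finset.Icc 1 (M' - 1), p j) ≤ (α.factorial : ℝ) := by
      refine le_trans (Finset.sum_le_sum_of_subset_of_nonneg
        (Finset.Icc_subset_Icc le_rfl hMle) (fun i _ _ => hpnonneg i)) hsum
    have hα2 : (0 : ℝ) ≤ (α : ℝ) - 2 := by
      have : (3 : ℝ) ≤ (α : ℝ) := by exact_mod_cast hα
      linarith
    calc (∑ k ∈ Finset.Icc 2 M', ((α : ℝ) - 2 * k + 2) * p (k - 1))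
        ≤ ((α : ℝ) - 2) * ∑ j ∈ Finset.Icc 1 (M' - 1), p j := by rw [← step2]; exact step1
      _ ≤ ((α : ℝ) - 2) * (α.factorial : ℝ) := mul_le_mul_of_nonneg_left step3 hα2
  -- total
  have hQ : (∑ k ∈ Finset.Icc 1 M', q k)
      = (∑ k ∈ Finset.Icc 1 M', p k)
        + ((α : ℝ) + ∑ k ∈ Finset.Icc 2 M', ((α : ℝ) - 2 * k + 2) * p (k - 1)) := by
    rw [Finset.sum_congr rfl hqall, Finset.sum_add_distrib]
    congr 1
    rw [hsplit, Finset.sum_insert (by simp)]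
    norm_num [hp0]
  rw [hQ]
  have hfact : ((α + 1).factorial : ℝ) = ((α : ℝ) + 1) * (α.factorial : ℝ) := by
    rw [Nat.factorial_succ]; push_cast; ring
  have hαf : (α : ℝ) ≤ (α.factorial : ℝ) := by exact_mod_cast Nat.self_le_factorial α
  have hf1 : (1 : ℝ) ≤ (α.factorial : ℝ) := by exact_mod_cast Nat.one_le_iff_ne_zero.mpr α.factorial_ne_zero
  have hα3 : (3 : ℝ) ≤ (α : ℝ) := by exact_mod_cast hα
  rw [hfact]
  nlinarith [sum1, sum2]
end
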